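/- The fractal 3-cube K of order 3 with digit set D = {(0,1,2), (0,2,1), (1,0,2), (1,1,1), (1,2,0), (2,0,1), (2,1,0)} (the unique nonempty compact K ⊆ ℝ³ with 3·K = K + D) is connected, possesses the one-point intersection property, and is not a dendrite: K contains a subset homeomorphic to a circle. -/

import Mathlib

open Pointwise

/-- `ℝ³` as Euclidean space. -/
abbrev E3 := EuclideanSpace ℝ (Fin 3)

/-- The vector `(a, b, c) ∈ ℝ³`. -/
noncomputable def v3 (a b c : ℝ) : E3 := (WithLp.equiv 2 (Fin 3 → ℝ)).symm ![a, b, c]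

/-- The piece `(K + d)/3` of a fractal cube of order 3. -/
noncomputable def piece (K : Set E3) (d : E3) : Set E3 := (3 : ℝ)⁻¹ • (K + {d})

/-- A set `K ⊆ ℝ³` is a dendrite if it is compact, connected, locally connected and contains
no subset homeomorphic to a circle. -/
def IsDendrite (K : Set E3) : Prop :=
  IsCompact K ∧ IsConnected K ∧ LocallyConnectedSpace K ∧
    ¬ ∃ C : Set E3, C ⊆ K ∧ Nonempty (C ≃ₜ Metric.sphere (0 : EuclideanSpace ℝ (Fin 2)) 1)

section Aux
open Set Metric Topology


noncomputable def fmap (d x : E3) : E3 := (3:ℝ)⁻¹ • (x + d)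

lemma fmap_dist (d x y : E3) : dist (fmap d x) (fmap d y) = 3⁻¹ * dist x y := by
  simp only [fmap, dist_eq_norm, ← smul_sub]
  rw [norm_smul]
  · congr 1
    · norm_num
    · congr 1; abel

lemma fmap_mem {K D : Set E3} (hfc : (3 : ℝ) • K = K + D) {d x : E3}
    (hd : d ∈ D) (hx : x ∈ K) : fmap d x ∈ K := by
  have h : x + d ∈ K + D := Set.add_mem_add hx hd
  rw [← hfc] at h
  obtain ⟨y, hy, hxy⟩ := h
  have : fmap d x = y := by
    simp only [fmap, ← hxy, smul_smul]
    norm_num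
  rwa [this]

lemma fmap_decomp {K D : Set E3} (hfc : (3 : ℝ) • K = K + D) {x : E3}
    (hx : x ∈ K) : ∃ d ∈ D, ∃ y ∈ K, x = fmap d y := by
  have h : (3:ℝ) • x ∈ (3:ℝ) • K := Set.smul_mem_smul_set hx
  rw [hfc] at h
  obtain ⟨y, hy, d, hd, hyd⟩ := h
  refine ⟨d, hd, y, hy, ?_⟩
  have hyd' : y + d = (3:ℝ) • x := hyd
  rw [fmap, hyd', smul_smul]
  norm_num

lemma shrink_to_K {K D S : Set E3} (hfc : (3 : ℝ) • K = K + D)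
    (hKne : K.Nonempty) (hKc : IsCompact K)
    (hS : IsCompact S) (hSne : S.Nonempty)
    (hstep : ∀ x ∈ S, ∃ d ∈ D, ∃ y ∈ S, x = fmap d y) : S ⊆ K := by
  set g : E3 → ℝ := fun x => Metric.infDist x K with hg
  have hgc : ContinuousOn g S := (Metric.continuous_infDist_pt K).continuousOn
  set M := sSup (g '' S) with hM
  have hbdd : BddAbove (g '' S) := (hS.image_of_continuousOn hgc).bddAbove
  have hle : ∀ x ∈ S, g x ≤ M := fun x hx => le_csSup hbdd ⟨x, hx, rfl⟩
  have key : ∀ x ∈ S, g x ≤ 3⁻¹ * M := by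
    intro x hx
    obtain ⟨d, hd, y, hy, rfl⟩ := hstep x hx
    obtain ⟨k, hk, hdk⟩ := hKc.exists_infDist_eq_dist hKne y
    calc g (fmap d y) ≤ dist (fmap d y) (fmap d k) := Metric.infDist_le_dist_of_mem (fmap_mem hfc hd hk)
    _ = 3⁻¹ * dist y k := fmap_dist d y k
    _ = 3⁻¹ * g y := by simp only [hg]; rw [hdk]
    _ ≤ 3⁻¹ * M := by have := hle y hy; linarith
  have hMle : M ≤ 3⁻¹ * M := csSup_le (hSne.image g) (by rintro _ ⟨x, hx, rfl⟩; exact key x hx)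
  have hM0 : M ≤ 0 := by linarith
  intro x hx
  have h1 : g x ≤ 0 := le_trans (hle x hx) hM0
  have h2 : 0 ≤ g x := Metric.infDist_nonneg
  have : Metric.infDist x K = 0 := le_antisymm h1 h2
  exact (IsClosed.mem_iff_infDist_zero hKc.isClosed hKne).2 this

lemma isCompact_segment' (x y : E3) : IsCompact (segment ℝ x y) := by
  rw [segment_eq_image ℝ x y]
  exact (isCompact_Icc).image (by continuity)

noncomputable def cc : E3 := v3 (1/2) (1/2) (1/2)

lemma two_smul_cc : v3 1 1 1 = (2:ℝ) • cc := by
  ext i; fin_cases i <;> simp [v3, cc] <;> norm_num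

lemma diag_subset {K D : Set E3} (hfc : (3 : ℝ) • K = K + D)
    (hKne : K.Nonempty) (hKc : IsCompact K) {u ub : E3}
    (hu : u ∈ D) (hub : ub ∈ D) (hm : v3 1 1 1 ∈ D)
    (hsum : u + ub = v3 2 2 2) :
    segment ℝ ((2:ℝ)⁻¹ • u) ((2:ℝ)⁻¹ • ub) ⊆ K := by
  have h2 : (v3 2 2 2 : E3) = u + ub := hsum.symm
  have hmid : (v3 1 1 1 : E3) = (2:ℝ)⁻¹ • (u + ub) := by
    rw [hsum]; ext i; fin_cases i <;> simp [v3] <;> norm_num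
  apply shrink_to_K hfc hKne hKc (isCompact_segment' _ _)
    ⟨_, left_mem_segment ℝ _ _⟩
  rintro x ⟨a, b, ha, hb, hab, rfl⟩
  have ha' : a = 1 - b := by linarith
  subst ha'
  rcases le_or_gt b (1/3) with hb1 | hb1
  · refine ⟨u, hu, (1-3*b) • ((2:ℝ)⁻¹ • u) + (3*b) • ((2:ℝ)⁻¹ • ub),
      ⟨1-3*b, 3*b, by linarith, by linarith, by ring, rfl⟩, ?_⟩
    rw [fmap]; module
  rcases le_or_gt b (2/3) with hb2 | hb2
  · refine ⟨v3 1 1 1, hm, (2-3*b) • ((2:ℝ)⁻¹ • u) + (3*b-1) • ((2:ℝ)⁻¹ • ub),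
      ⟨2-3*b, 3*b-1, by linarith, by linarith, by ring, rfl⟩, ?_⟩
    rw [fmap, hmid]; module
  · refine ⟨ub, hub, (3-3*b) • ((2:ℝ)⁻¹ • u) + (3*b-2) • ((2:ℝ)⁻¹ • ub),
      ⟨3-3*b, 3*b-2, by linarith, by linarith, by ring, rfl⟩, ?_⟩
    rw [fmap]; module

lemma half_subset {K D : Set E3} (hfc : (3 : ℝ) • K = K + D)
    (hKne : K.Nonempty) (hKc : IsCompact K) {d db : E3}
    (hd : d ∈ D) (hdb : db ∈ D) (hm : v3 1 1 1 ∈ D)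
    (hsum : d + db = v3 2 2 2) :
    segment ℝ cc ((2:ℝ)⁻¹ • d) ⊆ K := by
  have hcc : cc ∈ segment ℝ ((2:ℝ)⁻¹ • d) ((2:ℝ)⁻¹ • db) := by
    refine ⟨1/2, 1/2, by norm_num, by norm_num, by norm_num, ?_⟩
    have : (1/2:ℝ) • ((2:ℝ)⁻¹ • d) + (1/2:ℝ) • ((2:ℝ)⁻¹ • db) = (4:ℝ)⁻¹ • (d + db) := by
      module
    rw [this, hsum]
    ext i; fin_cases i <;> simp [v3, cc] <;> norm_num
  have hsub : segment ℝ cc ((2:ℝ)⁻¹ • d) ⊆ segment ℝ ((2:ℝ)⁻¹ • d) ((2:ℝ)⁻¹ • db) :=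
    (convex_segment _ _).segment_subset hcc (left_mem_segment ℝ _ _)
  exact hsub.trans (diag_subset hfc hKne hKc hd hdb hm hsum)


lemma fmap_continuous (d : E3) : Continuous (fmap d) := by
  unfold fmap; fun_prop

noncomputable def StarSet (D : Set E3) : Set E3 := ⋃ d ∈ D, segment ℝ cc ((2:ℝ)⁻¹ • d)

noncomputable def Xn (D : Set E3) : ℕ → Set E3
  | 0 => StarSet D
  | (n+1) => StarSet D ∪ ⋃ d ∈ D, fmap d '' Xn D n

lemma norm_v3 (a b c : ℝ) : ‖(v3 a b c : E3)‖ = Real.sqrt (a^2+b^2+c^2) := by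
  rw [EuclideanSpace.norm_eq]
  congr 1
  rw [Fin.sum_univ_three]
  simp only [v3, WithLp.equiv_symm_apply, PiLp.toLp_apply, Matrix.cons_val_zero, Matrix.cons_val_one,
    Matrix.head_cons, Matrix.cons_val_two, Matrix.tail_cons]
  rw [Real.norm_eq_abs, Real.norm_eq_abs, Real.norm_eq_abs, sq_abs, sq_abs, sq_abs]

lemma v3_sub (a b c d e f : ℝ) : (v3 a b c : E3) - v3 d e f = v3 (a-d) (b-e) (c-f) := by
  ext i; fin_cases i <;> simp [v3]

lemma sqrt2_le_norm_v3 (a b c d e f : ℝ) (h : 2 ≤ (a-d)^2+(b-e)^2+(c-f)^2) :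
    Real.sqrt 2 ≤ ‖(v3 a b c : E3) - v3 d e f‖ := by
  rw [v3_sub, norm_v3]
  exact Real.sqrt_le_sqrt h

lemma norm_v3_le_sqrt2 (a b c d e f : ℝ) (h : (a-d)^2+(b-e)^2+(c-f)^2 ≤ 2) :
    ‖(v3 a b c : E3) - v3 d e f‖ ≤ Real.sqrt 2 := by
  rw [v3_sub, norm_v3]
  exact Real.sqrt_le_sqrt h

lemma tangent_point {a b x : E3} {r : ℝ} (hx : dist x a ≤ r) (hy : dist x b ≤ r)
    (hab : 2*r ≤ dist a b) : x = (2:ℝ)⁻¹ • (a + b) := by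
  set u := x - a with hu
  set v := x - b with hv
  have hun : ‖u‖ ≤ r := by rwa [hu, ← dist_eq_norm]
  have hvn : ‖v‖ ≤ r := by rwa [hv, ← dist_eq_norm]
  have huv : 2*r ≤ ‖u - v‖ := by
    have : u - v = b - a := by rw [hu, hv]; abel
    rw [this, ← dist_eq_norm, dist_comm]
    exact hab
  have hpar1 : ‖u + v‖^2 = ‖u‖^2 + 2 * inner ℝ u v + ‖v‖^2 := norm_add_sq_real u v
  have hpar2 : ‖u - v‖^2 = ‖u‖^2 - 2 * inner ℝ u v + ‖v‖^2 := norm_sub_sq_real u v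
  have hz : ‖u + v‖ = 0 := by
    nlinarith [norm_nonneg (u + v), norm_nonneg (u - v), norm_nonneg u, norm_nonneg v]
  have hsum : u + v = 0 := norm_eq_zero.mp hz
  have key : x - (2:ℝ)⁻¹ • (a + b) = (2:ℝ)⁻¹ • (u + v) := by rw [hu, hv]; module
  rw [hsum, smul_zero, sub_eq_zero] at key
  exact key

lemma piece_eq_image (d : E3) : piece K d = fmap d '' K := by
  unfold piece fmap
  ext x
  constructor
  · rintro ⟨y, hy, rfl⟩
    obtain ⟨k, hk, z, hz, rfl⟩ := Set.mem_add.mp hy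
    rw [Set.mem_singleton_iff] at hz
    subst hz
    exact ⟨k, hk, rfl⟩
  · rintro ⟨k, hk, rfl⟩
    exact ⟨k + d, Set.add_mem_add hk rfl, rfl⟩

noncomputable def PP0 : E3 := cc
noncomputable def PP1 : E3 := fmap (v3 0 1 2) cc
noncomputable def PP2 : E3 := fmap (v3 1 0 2) cc

noncomputable def CircC : Set E3 :=
  segment ℝ PP0 PP1 ∪ segment ℝ PP1 PP2 ∪ segment ℝ PP2 PP0

section Main
variable {K D : Set E3} (hfc : (3 : ℝ) • K = K + D) (hKne : K.Nonempty) (hKc : IsCompact K)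
  (hDdef : D = ({v3 0 1 2, v3 0 2 1, v3 1 0 2, v3 1 1 1,
      v3 1 2 0, v3 2 0 1, v3 2 1 0} : Set E3))

include hfc hKne hKc hDdef

lemma halfdiag : ∀ d ∈ D, segment ℝ cc ((2:ℝ)⁻¹ • d) ⊆ K := by
  have hm : (v3 1 1 1 : E3) ∈ D := by rw [hDdef]; simp
  have h1 : (v3 0 1 2 : E3) ∈ D := by rw [hDdef]; simp
  have h2 : (v3 0 2 1 : E3) ∈ D := by rw [hDdef]; simp
  have h3 : (v3 1 0 2 : E3) ∈ D := by rw [hDdef]; simp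
  have h5 : (v3 1 2 0 : E3) ∈ D := by rw [hDdef]; simp
  have h6 : (v3 2 0 1 : E3) ∈ D := by rw [hDdef]; simp
  have h7 : (v3 2 1 0 : E3) ∈ D := by rw [hDdef]; simp
  intro d hd
  rw [hDdef] at hd
  simp only [Set.mem_insert_iff, Set.mem_singleton_iff] at hd
  rcases hd with rfl | rfl | rfl | rfl | rfl | rfl | rfl
  · exact half_subset hfc hKne hKc h1 h7 hm (by ext i; fin_cases i <;> simp [v3] <;> norm_num)
  · exact half_subset hfc hKne hKc h2 h6 hm (by ext i; fin_cases i <;> simp [v3] <;> norm_num)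
  · exact half_subset hfc hKne hKc h3 h5 hm (by ext i; fin_cases i <;> simp [v3] <;> norm_num)
  · -- center: segment cc cc = {cc}
    have : (2:ℝ)⁻¹ • (v3 1 1 1 : E3) = cc := by
      ext i; fin_cases i <;> simp [v3, cc] <;> norm_num
    rw [this, segment_same]
    intro x hx
    rw [Set.mem_singleton_iff] at hx
    subst hx
    exact half_subset hfc hKne hKc h1 h7 hm (by ext i; fin_cases i <;> simp [v3] <;> norm_num)
      (left_mem_segment ℝ _ _)
  · exact half_subset hfc hKne hKc h5 h3 hm (by ext i; fin_cases i <;> simp [v3] <;> norm_num)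
  · exact half_subset hfc hKne hKc h6 h2 hm (by ext i; fin_cases i <;> simp [v3] <;> norm_num)
  · exact half_subset hfc hKne hKc h7 h1 hm (by ext i; fin_cases i <;> simp [v3] <;> norm_num)


lemma hmemD : (v3 1 1 1 : E3) ∈ D := by rw [hDdef]; simp

lemma star_subK : StarSet D ⊆ K := by
  apply Set.iUnion₂_subset
  exact halfdiag hfc hKne hKc hDdef

lemma cc_star : cc ∈ StarSet D :=
  Set.mem_biUnion (hmemD hfc hKne hKc hDdef) (left_mem_segment ℝ _ _)

lemma fmapcc_star : ∀ d ∈ D, fmap d cc ∈ StarSet D := by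
  intro d hd
  apply Set.mem_biUnion hd
  refine ⟨1/3, 2/3, by norm_num, by norm_num, by norm_num, ?_⟩
  rw [fmap]; module

lemma star_conn : IsPreconnected (StarSet D) := by
  have : StarSet D = ⋃₀ ((fun d => segment ℝ cc ((2:ℝ)⁻¹ • d)) '' D) := by
    rw [Set.sUnion_image]; rfl
  rw [this]
  apply isPreconnected_sUnion cc
  · rintro s ⟨d, hd, rfl⟩; exact left_mem_segment ℝ _ _
  · rintro s ⟨d, hd, rfl⟩; exact (convex_segment _ _).isPreconnected

lemma Xn_subK : ∀ n, Xn D n ⊆ K := by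
  intro n
  induction n with
  | zero => exact star_subK hfc hKne hKc hDdef
  | succ n ih =>
    apply Set.union_subset (star_subK hfc hKne hKc hDdef)
    apply Set.iUnion₂_subset
    rintro d hd _ ⟨y, hy, rfl⟩
    exact fmap_mem hfc hd (ih hy)

lemma cc_Xn : ∀ n, cc ∈ Xn D n := by
  intro n
  cases n with
  | zero => exact cc_star hfc hKne hKc hDdef
  | succ n => exact Or.inl (cc_star hfc hKne hKc hDdef)

lemma Xn_conn : ∀ n, IsPreconnected (Xn D n) := by
  intro n
  induction n with
  | zero => exact star_conn hfc hKne hKc hDdef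
  | succ n ih =>
    have hDne : D.Nonempty := ⟨_, hmemD hfc hKne hKc hDdef⟩
    have heq : Xn D (n+1) = ⋃₀ ((fun d => StarSet D ∪ fmap d '' Xn D n) '' D) := by
      rw [Set.sUnion_image]
      ext x
      simp only [Xn, Set.mem_union, Set.mem_iUnion]
      constructor
      · rintro (hx | ⟨d, hd, hx⟩)
        · obtain ⟨d, hd⟩ := hDne
          exact ⟨d, hd, Or.inl hx⟩
        · exact ⟨d, hd, Or.inr hx⟩
      · rintro ⟨d, hd, hx | hx⟩
        · exact Or.inl hx
        · exact Or.inr ⟨d, hd, hx⟩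
    rw [heq]
    apply isPreconnected_sUnion cc
    · rintro s ⟨d, hd, rfl⟩; exact Or.inl (cc_star hfc hKne hKc hDdef)
    · rintro s ⟨d, hd, rfl⟩
      apply IsPreconnected.union (fmap d cc)
      · exact fmapcc_star hfc hKne hKc hDdef d hd
      · exact ⟨cc, cc_Xn hfc hKne hKc hDdef n, rfl⟩
      · exact star_conn hfc hKne hKc hDdef
      · exact ih.image _ (fmap_continuous d).continuousOn

lemma K_connected : IsConnected K := by
  obtain ⟨r, hr⟩ := hKc.isBounded.subset_closedBall cc
  have happrox : ∀ n, ∀ x ∈ K, ∃ p ∈ Xn D n, dist x p ≤ r / 3^n := by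
    intro n
    induction n with
    | zero =>
      intro x hx
      refine ⟨cc, cc_Xn hfc hKne hKc hDdef 0, ?_⟩
      simpa using hr hx
    | succ n ih =>
      intro x hx
      obtain ⟨d, hd, y, hy, rfl⟩ := fmap_decomp hfc hx
      obtain ⟨p, hp, hdist⟩ := ih y hy
      refine ⟨fmap d p, Or.inr (Set.mem_biUnion hd ⟨p, hp, rfl⟩), ?_⟩
      rw [fmap_dist]
      have h3 : (0:ℝ) < 3 ^ n := by positivity
      calc 3⁻¹ * dist y p ≤ 3⁻¹ * (r / 3^n) := by linarith
      _ = r / 3^(n+1) := by rw [pow_succ]; ring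
  have hr0 : 0 ≤ r := by
    obtain ⟨x, hx⟩ := hKne
    have := hr hx
    simp only [Metric.mem_closedBall] at this
    exact le_trans dist_nonneg this
  have hWsub : (⋃ n, Xn D n) ⊆ K := Set.iUnion_subset (Xn_subK hfc hKne hKc hDdef)
  have hKeq : K = closure (⋃ n, Xn D n) := by
    apply Set.Subset.antisymm
    · intro x hx
      rw [Metric.mem_closure_iff]
      intro ε hε
      obtain ⟨n, hn⟩ : ∃ n : ℕ, (1/3:ℝ)^n < ε / (r+1) := by
        apply exists_pow_lt_of_lt_one (by positivity)
        norm_num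
      obtain ⟨p, hp, hdist⟩ := happrox n x hx
      refine ⟨p, Set.mem_iUnion.2 ⟨n, hp⟩, ?_⟩
      have h3 : (0:ℝ) < (1/3:ℝ)^n := by positivity
      have : r / 3^n = r * (1/3)^n := by
        rw [div_eq_mul_inv]; congr 1; rw [← inv_pow]; norm_num
      calc dist x p ≤ r / 3^n := hdist
      _ = r * (1/3)^n := this
      _ < (r+1) * (1/3)^n := by nlinarith
      _ < ε := by
        rw [div_eq_mul_inv] at hn
        have hr1 : (0:ℝ) < r + 1 := by linarith
        calc (r+1) * (1/3)^n < (r+1) * (ε * (r+1)⁻¹) := by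
              apply mul_lt_mul_of_pos_left _ hr1
              rwa [← div_eq_mul_inv]
        _ = ε := by field_simp
    · exact closure_minimal hWsub hKc.isClosed
  refine ⟨hKne, ?_⟩
  rw [hKeq]
  apply IsPreconnected.closure
  have : (⋃ n, Xn D n) = ⋃₀ (Set.range (Xn D)) := (Set.sUnion_range _).symm
  rw [this]
  apply isPreconnected_sUnion cc
  · rintro s ⟨n, rfl⟩; exact cc_Xn hfc hKne hKc hDdef n
  · rintro s ⟨n, rfl⟩; exact Xn_conn hfc hKne hKc hDdef n


lemma K_ball : ∀ x ∈ K, dist x cc ≤ Real.sqrt 2 / 2 := by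
  have hDnorm : ∀ d ∈ D, ‖d - v3 1 1 1‖ ≤ Real.sqrt 2 := by
    intro d hd
    rw [hDdef] at hd
    simp only [Set.mem_insert_iff, Set.mem_singleton_iff] at hd
    rcases hd with rfl | rfl | rfl | rfl | rfl | rfl | rfl <;>
      exact norm_v3_le_sqrt2 _ _ _ _ _ _ (by norm_num)
  set g : E3 → ℝ := fun x => dist x cc with hg
  set M := sSup (g '' K) with hM
  have hbdd : BddAbove (g '' K) := (hKc.image (continuous_id.dist continuous_const)).bddAbove
  have hle : ∀ x ∈ K, g x ≤ M := fun x hx => le_csSup hbdd ⟨x, hx, rfl⟩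
  have key : ∀ x ∈ K, g x ≤ 3⁻¹ * (M + Real.sqrt 2) := by
    intro x hx
    obtain ⟨d, hd, y, hy, rfl⟩ := fmap_decomp hfc hx
    have hsplit : fmap d y - cc = (3:ℝ)⁻¹ • ((y - cc) + (d - v3 1 1 1)) := by
      rw [fmap, two_smul_cc]; module
    have : g (fmap d y) = ‖fmap d y - cc‖ := dist_eq_norm _ _
    rw [this, hsplit, norm_smul]
    have h1 : ‖(3:ℝ)⁻¹‖ = 3⁻¹ := by rw [Real.norm_eq_abs]; norm_num
    rw [h1]
    have h2 : ‖y - cc + (d - v3 1 1 1)‖ ≤ ‖y - cc‖ + ‖d - v3 1 1 1‖ := norm_add_le _ _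
    have h3 : ‖y - cc‖ = g y := (dist_eq_norm _ _).symm
    have h4 := hle y hy
    have h5 := hDnorm d hd
    rw [h3] at h2
    have : ‖y - cc + (d - v3 1 1 1)‖ ≤ M + Real.sqrt 2 := by linarith
    nlinarith
  have hMle : M ≤ 3⁻¹ * (M + Real.sqrt 2) :=
    csSup_le (hKne.image g) (by rintro _ ⟨x, hx, rfl⟩; exact key x hx)
  intro x hx
  have := hle x hx
  simp only [hg] at this
  have hM2 : M ≤ Real.sqrt 2 / 2 := by linarith
  linarith


lemma one_point : ∀ di ∈ D, ∀ dj ∈ D, di ≠ dj →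
    (piece K di ∩ piece K dj).Subsingleton := by
  have hdist : ∀ di ∈ D, ∀ dj ∈ D, di ≠ dj → Real.sqrt 2 ≤ ‖di - dj‖ := by
    intro di hdi dj hdj hne
    rw [hDdef] at hdi hdj
    simp only [Set.mem_insert_iff, Set.mem_singleton_iff] at hdi hdj
    rcases hdi with rfl | rfl | rfl | rfl | rfl | rfl | rfl <;>
      rcases hdj with rfl | rfl | rfl | rfl | rfl | rfl | rfl <;>
      first
        | exact absurd rfl hne
        | exact sqrt2_le_norm_v3 _ _ _ _ _ _ (by norm_num)
  intro di hdi dj hdj hne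
  have hcenter : dist (fmap di cc) (fmap dj cc) = 3⁻¹ * ‖di - dj‖ := by
    rw [dist_eq_norm]
    have : fmap di cc - fmap dj cc = (3:ℝ)⁻¹ • (di - dj) := by
      unfold fmap; module
    rw [this, norm_smul, Real.norm_eq_abs]
    norm_num
  have hrr : 2 * (Real.sqrt 2 / 6) ≤ dist (fmap di cc) (fmap dj cc) := by
    rw [hcenter]
    have := hdist di hdi dj hdj hne
    linarith
  have hball : ∀ d ∈ D, ∀ x ∈ piece K d, dist x (fmap d cc) ≤ Real.sqrt 2 / 6 := by
    intro d hd x hx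
    rw [piece_eq_image] at hx
    obtain ⟨k, hk, rfl⟩ := hx
    rw [fmap_dist]
    have := K_ball hfc hKne hKc hDdef k hk
    linarith
  intro x hx y hy
  have hx1 := hball di hdi x hx.1
  have hx2 := hball dj hdj x hx.2
  have hy1 := hball di hdi y hy.1
  have hy2 := hball dj hdj y hy.2
  rw [tangent_point hx1 hx2 hrr, tangent_point hy1 hy2 hrr]


lemma edge_in_K {A B dg1 w1 dg2 w2 : E3} (h1 : dg1 ∈ D) (hw1 : w1 ∈ D)
    (h2 : dg2 ∈ D) (hw2 : w2 ∈ D)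
    (hidA : ∀ b : ℝ, (1-b)•A + b•B = fmap dg1 ((1-2*b)•cc + (2*b)•((2:ℝ)⁻¹•w1)))
    (hidB : ∀ b : ℝ, (1-b)•B + b•A = fmap dg2 ((1-2*b)•cc + (2*b)•((2:ℝ)⁻¹•w2))) :
    segment ℝ A B ⊆ K := by
  rintro x ⟨a, b, ha, hb, hab, rfl⟩
  have ha' : a = 1 - b := by linarith
  subst ha'
  rcases le_or_gt b (1/2) with hble | hbgt
  · rw [hidA b]
    exact fmap_mem hfc h1 (halfdiag hfc hKne hKc hDdef w1 hw1
      ⟨1-2*b, 2*b, by linarith, by linarith, by ring, rfl⟩)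
  · have hsw : (1-b) • A + b • B = (1-(1-b)) • B + (1-b) • A := by module
    rw [hsw, hidB (1-b)]
    exact fmap_mem hfc h2 (halfdiag hfc hKne hKc hDdef w2 hw2
      ⟨1-2*(1-b), 2*(1-b), by linarith, by linarith, by ring, rfl⟩)

lemma CircC_subset : CircC ⊆ K := by
  have hm : (v3 1 1 1 : E3) ∈ D := by rw [hDdef]; simp
  have h1 : (v3 0 1 2 : E3) ∈ D := by rw [hDdef]; simp
  have h2 : (v3 0 2 1 : E3) ∈ D := by rw [hDdef]; simp
  have h3 : (v3 1 0 2 : E3) ∈ D := by rw [hDdef]; simp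
  have h5 : (v3 1 2 0 : E3) ∈ D := by rw [hDdef]; simp
  have h6 : (v3 2 0 1 : E3) ∈ D := by rw [hDdef]; simp
  have h7 : (v3 2 1 0 : E3) ∈ D := by rw [hDdef]; simp
  have e1 : segment ℝ PP0 PP1 ⊆ K := by
    apply edge_in_K hfc hKne hKc hDdef hm h1 h1 h7 <;>
      (intro b; ext i; fin_cases i <;>
        simp [fmap, cc, v3, PP0, PP1, PiLp.add_apply, PiLp.smul_apply, smul_eq_mul] <;> ring)
  have e2 : segment ℝ PP1 PP2 ⊆ K := by
    apply edge_in_K hfc hKne hKc hDdef h1 h6 h3 h2 <;>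
      (intro b; ext i; fin_cases i <;>
        simp [fmap, cc, v3, PP1, PP2, PiLp.add_apply, PiLp.smul_apply, smul_eq_mul] <;> ring)
  have e3 : segment ℝ PP2 PP0 ⊆ K := by
    apply edge_in_K hfc hKne hKc hDdef h3 h5 hm h3 <;>
      (intro b; ext i; fin_cases i <;>
        simp [fmap, cc, v3, PP2, PP0, PiLp.add_apply, PiLp.smul_apply, smul_eq_mul] <;> ring)
  exact Set.union_subset (Set.union_subset e1 e2) e3

end Main



abbrev E2 := EuclideanSpace ℝ (Fin 2)
noncomputable def v2 (a b : ℝ) : E2 := (WithLp.equiv 2 (Fin 2 → ℝ)).symm ![a, b]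

def Tri : Set E2 := {x | -1 ≤ x 0 ∧ -1 ≤ x 1 ∧ x 0 + x 1 ≤ 1}
def TriU : Set E2 := {x | -1 < x 0 ∧ -1 < x 1 ∧ x 0 + x 1 < 1}

lemma ceval (i : Fin 2) : Continuous fun x : E2 => x i :=
  (EuclideanSpace.proj i).continuous

lemma Tri_eq : Tri = {x : E2 | -1 ≤ x 0} ∩ ({x | -1 ≤ x 1} ∩ {x | x 0 + x 1 ≤ 1}) := by
  ext x; simp [Tri, and_assoc]

lemma Tri_closed : IsClosed Tri := by
  rw [Tri_eq]
  exact (isClosed_le continuous_const (ceval 0)).inter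
    ((isClosed_le continuous_const (ceval 1)).inter
      (isClosed_le ((ceval 0).add (ceval 1)) continuous_const))

lemma TriU_open : IsOpen TriU := by
  have : TriU = {x : E2 | -1 < x 0} ∩ ({x | -1 < x 1} ∩ {x | x 0 + x 1 < 1}) := by
    ext x; simp [TriU, and_assoc]
  rw [this]
  exact (isOpen_lt continuous_const (ceval 0)).inter
    ((isOpen_lt continuous_const (ceval 1)).inter
      (isOpen_lt ((ceval 0).add (ceval 1)) continuous_const))

lemma abs_coord_le (x : E2) (i : Fin 2) : |x i| ≤ ‖x‖ := by
  rw [EuclideanSpace.norm_eq, show |x i| = Real.sqrt (‖x i‖^2) by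
    rw [Real.sqrt_sq_eq_abs, Real.norm_eq_abs, abs_abs]]
  exact Real.sqrt_le_sqrt (Finset.single_le_sum (fun j _ => sq_nonneg ‖x j‖)
    (Finset.mem_univ i))

lemma Tri_convex : Convex ℝ Tri := by
  rintro x hx y hy a b ha hb hab
  obtain ⟨hx0, hx1, hx2⟩ := hx
  obtain ⟨hy0, hy1, hy2⟩ := hy
  have e0 : (a • x + b • y) 0 = a * x 0 + b * y 0 := by
    simp [PiLp.add_apply, PiLp.smul_apply]
  have e1 : (a • x + b • y) 1 = a * x 1 + b * y 1 := by
    simp [PiLp.add_apply, PiLp.smul_apply]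
  refine ⟨?_, ?_, ?_⟩ <;> simp only [e0, e1] <;> nlinarith

lemma Tri_bounded : Bornology.IsBounded Tri := by
  rw [Metric.isBounded_iff_subset_closedBall 0]
  refine ⟨3, fun x hx => ?_⟩
  obtain ⟨h0, h1, h2⟩ := hx
  simp only [Metric.mem_closedBall, dist_zero_right]
  rw [EuclideanSpace.norm_eq]
  have : ∑ i, ‖x i‖^2 = ‖x 0‖^2 + ‖x 1‖^2 := Fin.sum_univ_two _
  rw [this]
  have hb0 : |x 0| ≤ 2 := by rw [abs_le]; constructor <;> nlinarith
  have hb1 : |x 1| ≤ 2 := by rw [abs_le]; constructor <;> nlinarith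
  have : ‖x 0‖^2 + ‖x 1‖^2 ≤ 9 := by
    rw [Real.norm_eq_abs, Real.norm_eq_abs]
    nlinarith [abs_nonneg (x 0), abs_nonneg (x 1)]
  calc Real.sqrt (‖x 0‖^2 + ‖x 1‖^2) ≤ Real.sqrt 9 := Real.sqrt_le_sqrt this
  _ = 3 := by rw [show (9:ℝ) = 3^2 by norm_num, Real.sqrt_sq (by norm_num)]

lemma Tri_mem_nhds : Tri ∈ 𝓝 (0 : E2) := by
  rw [Metric.mem_nhds_iff]
  refine ⟨1/2, by norm_num, fun y hy => ?_⟩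
  rw [Metric.mem_ball, dist_zero_right] at hy
  have h0 := (abs_coord_le y 0).trans_lt hy
  have h1 := (abs_coord_le y 1).trans_lt hy
  rw [abs_lt] at h0 h1
  exact ⟨by linarith [h0.1], by linarith [h1.1], by linarith [h0.2, h1.2]⟩

lemma interior_Tri : interior Tri = TriU := by
  apply Set.Subset.antisymm
  · intro x hx
    rw [mem_interior_iff_mem_nhds, Metric.mem_nhds_iff] at hx
    obtain ⟨ε, hε, hball⟩ := hx
    have key : ∀ i : Fin 2, ∀ s : ℝ, |s| < ε →
        (x + s • EuclideanSpace.single i (1:ℝ)) ∈ Tri := by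
      intro i s hs
      apply hball
      rw [Metric.mem_ball, dist_eq_norm]
      have : x + s • EuclideanSpace.single i (1:ℝ) - x = s • EuclideanSpace.single i (1:ℝ) := by
        abel
      rw [this, norm_smul, EuclideanSpace.norm_single]
      simpa using hs
    have hs2 : |(-(ε/2) : ℝ)| < ε := by rw [abs_neg, abs_of_pos (by linarith)]; linarith
    have hs3 : |(ε/2 : ℝ)| < ε := by rw [abs_of_pos (by linarith)]; linarith
    have c00 : (x + (-(ε/2)) • EuclideanSpace.single (0:Fin 2) (1:ℝ)) 0 = x 0 - ε/2 := by
      simp [PiLp.add_apply, PiLp.smul_apply, EuclideanSpace.single_apply]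
      ring
    have c01 : (x + (-(ε/2)) • EuclideanSpace.single (0:Fin 2) (1:ℝ)) 1 = x 1 := by
      simp [PiLp.add_apply, PiLp.smul_apply, EuclideanSpace.single_apply]
    have c10 : (x + (-(ε/2)) • EuclideanSpace.single (1:Fin 2) (1:ℝ)) 0 = x 0 := by
      simp [PiLp.add_apply, PiLp.smul_apply, EuclideanSpace.single_apply]
    have c11 : (x + (-(ε/2)) • EuclideanSpace.single (1:Fin 2) (1:ℝ)) 1 = x 1 - ε/2 := by
      simp [PiLp.add_apply, PiLp.smul_apply, EuclideanSpace.single_apply]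
      ring
    have c20 : (x + (ε/2) • EuclideanSpace.single (0:Fin 2) (1:ℝ)) 0 = x 0 + ε/2 := by
      simp [PiLp.add_apply, PiLp.smul_apply, EuclideanSpace.single_apply]
    have c21 : (x + (ε/2) • EuclideanSpace.single (0:Fin 2) (1:ℝ)) 1 = x 1 := by
      simp [PiLp.add_apply, PiLp.smul_apply, EuclideanSpace.single_apply]
    obtain ⟨h1, _, _⟩ := key 0 (-(ε/2)) hs2
    obtain ⟨_, h2, _⟩ := key 1 (-(ε/2)) hs2
    obtain ⟨_, _, h3⟩ := key 0 (ε/2) hs3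
    rw [c00] at h1
    rw [c11] at h2
    rw [c20, c21] at h3
    exact ⟨by linarith, by linarith, by linarith⟩
  · exact interior_maximal (fun x hx => ⟨le_of_lt hx.1, le_of_lt hx.2.1, le_of_lt hx.2.2⟩)
      TriU_open

noncomputable def Q0 : E2 := v2 (-1) (-1)
noncomputable def Q1 : E2 := v2 (-1) 2
noncomputable def Q2 : E2 := v2 2 (-1)

lemma v2_apply0 (a b : ℝ) : (v2 a b) 0 = a := by simp [v2]
lemma v2_apply1 (a b : ℝ) : (v2 a b) 1 = b := by simp [v2]

lemma comb_apply (a b : ℝ) (x y : E2) (i : Fin 2) :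
    (a • x + b • y) i = a * x i + b * y i := by
  simp [PiLp.add_apply, PiLp.smul_apply]

lemma frontier_Tri : frontier Tri =
    segment ℝ Q0 Q1 ∪ segment ℝ Q1 Q2 ∪ segment ℝ Q2 Q0 := by
  rw [Tri_closed.frontier_eq, interior_Tri]
  ext x
  constructor
  · rintro ⟨⟨h0, h1, h2⟩, hU⟩
    simp only [TriU, Set.mem_setOf_eq, not_and_or, not_lt] at hU
    rcases hU with h | h | h
    · have hx0 : x 0 = -1 := le_antisymm h h0
      left; left
      refine ⟨(2 - x 1)/3, (x 1 + 1)/3, by linarith, by linarith, by ring, ?_⟩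
      ext i
      fin_cases i <;>
        simp only [comb_apply, Q0, Q1, v2_apply0, v2_apply1, Fin.zero_eta, Fin.mk_one] <;>
        linarith
    · have hx1 : x 1 = -1 := le_antisymm h h1
      right
      refine ⟨(x 0 + 1)/3, (2 - x 0)/3, by linarith, by linarith, by ring, ?_⟩
      ext i
      fin_cases i <;>
        simp only [comb_apply, Q0, Q2, v2_apply0, v2_apply1, Fin.zero_eta, Fin.mk_one] <;>
        linarith
    · have hx : x 0 + x 1 = 1 := le_antisymm h2 h
      left; right
      refine ⟨(2 - x 0)/3, (x 0 + 1)/3, by linarith, by linarith, by ring, ?_⟩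
      ext i
      fin_cases i <;>
        simp only [comb_apply, Q1, Q2, v2_apply0, v2_apply1, Fin.zero_eta, Fin.mk_one] <;>
        linarith
  · rintro ((⟨a, b, ha, hb, hab, rfl⟩ | ⟨a, b, ha, hb, hab, rfl⟩) | ⟨a, b, ha, hb, hab, rfl⟩)
    · have c0 : (a • Q0 + b • Q1) 0 = -1 := by
        rw [comb_apply]; simp only [Q0, Q1, v2_apply0]; linarith
      have c1 : (a • Q0 + b • Q1) 1 = -a + 2*b := by
        rw [comb_apply]; simp only [Q0, Q1, v2_apply1]; ring
      refine ⟨⟨by rw [c0], by rw [c1]; linarith, by rw [c0, c1]; linarith⟩, ?_⟩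
      rintro ⟨p, -, -⟩
      rw [c0] at p; exact lt_irrefl _ p
    · have c0 : (a • Q1 + b • Q2) 0 = -a + 2*b := by
        rw [comb_apply]; simp only [Q1, Q2, v2_apply0]; ring
      have c1 : (a • Q1 + b • Q2) 1 = 2*a - b := by
        rw [comb_apply]; simp only [Q1, Q2, v2_apply1]; ring
      have hsum : (a • Q1 + b • Q2) 0 + (a • Q1 + b • Q2) 1 = 1 := by
        rw [c0, c1]; linarith
      refine ⟨⟨by rw [c0]; linarith, by rw [c1]; linarith, by rw [c0, c1]; linarith⟩, ?_⟩
      rintro ⟨-, -, p⟩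
      rw [c0, c1] at p; linarith
    · have c0 : (a • Q2 + b • Q0) 0 = 2*a - b := by
        rw [comb_apply]; simp only [Q2, Q0, v2_apply0]; ring
      have c1 : (a • Q2 + b • Q0) 1 = -1 := by
        rw [comb_apply]; simp only [Q2, Q0, v2_apply1]; linarith
      refine ⟨⟨by rw [c0]; linarith, by rw [c1], by rw [c0, c1]; linarith⟩, ?_⟩
      rintro ⟨-, p, -⟩
      rw [c1] at p; exact lt_irrefl _ p

noncomputable def gh : E2 ≃ₜ E2 :=
  gaugeRescaleHomeomorph (closedBall 0 1) Tri
    (convex_closedBall 0 1) (closedBall_mem_nhds 0 one_pos)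
    (NormedSpace.isVonNBounded_closedBall ℝ E2 1)
    Tri_convex Tri_mem_nhds
    ((NormedSpace.isVonNBounded_iff ℝ).2 Tri_bounded)

lemma gh_sphere : gh '' (sphere (0:E2) 1) = frontier Tri := by
  have h1 : gh '' (closedBall (0:E2) 1) = Tri := by
    have := image_gaugeRescaleHomeomorph_closure
      (convex_closedBall (0:E2) 1) (closedBall_mem_nhds 0 one_pos)
      (NormedSpace.isVonNBounded_closedBall ℝ E2 1)
      Tri_convex Tri_mem_nhds
      ((NormedSpace.isVonNBounded_iff ℝ).2 Tri_bounded)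
    rwa [IsClosed.closure_eq isClosed_closedBall, IsClosed.closure_eq Tri_closed] at this
  have h2 : gh '' frontier (closedBall (0:E2) 1) = frontier Tri := by
    rw [Homeomorph.image_frontier, h1]
  rwa [frontier_closedBall (0:E2) one_ne_zero] at h2

noncomputable def sphere_homeo_frontier :
    (sphere (0:E2) 1) ≃ₜ (frontier Tri : Set E2) :=
  (gh.image (sphere (0:E2) 1)).trans (Homeomorph.setCongr gh_sphere)


noncomputable def Lmap (x : E2) : E3 :=
  cc + ((x 0 + 1)/9) • (v3 0 (-1) 1 : E3) + ((x 1 + 1)/9) • (v3 (-1) 0 1 : E3)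

lemma Lmap_cont : Continuous Lmap := by
  apply Continuous.add
  apply Continuous.add continuous_const
  · exact (((ceval 0).add continuous_const).div_const 9).smul continuous_const
  · exact (((ceval 1).add continuous_const).div_const 9).smul continuous_const

lemma Lmap_apply (x : E2) :
    Lmap x = v3 (1/2 - (x 1 + 1)/9) (1/2 - (x 0 + 1)/9) (1/2 + (x 0 + 1)/9 + (x 1 + 1)/9) := by
  unfold Lmap
  ext i
  fin_cases i <;>
    simp [cc, v3, PiLp.add_apply, PiLp.smul_apply, smul_eq_mul] <;> ring

lemma Lmap_inj : Function.Injective Lmap := by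
  intro x y h
  rw [Lmap_apply, Lmap_apply] at h
  have h0 : (1:ℝ)/2 - (x 1 + 1)/9 = 1/2 - (y 1 + 1)/9 := by
    have := congrArg (fun z : E3 => z 0) h
    simpa [v3] using this
  have h1 : (1:ℝ)/2 - (x 0 + 1)/9 = 1/2 - (y 0 + 1)/9 := by
    have := congrArg (fun z : E3 => z 1) h
    simpa [v3] using this
  ext i
  fin_cases i
  · show x 0 = y 0; linarith
  · show x 1 = y 1; linarith

lemma Lmap_comb (a b : ℝ) (hab : a + b = 1) (A B : E2) :
    Lmap (a • A + b • B) = a • Lmap A + b • Lmap B := by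
  have hb : b = 1 - a := by linarith
  subst hb
  rw [Lmap_apply, Lmap_apply, Lmap_apply]
  have c0 : (a • A + (1-a) • B) 0 = a * A 0 + (1-a) * B 0 := comb_apply _ _ _ _ _
  have c1 : (a • A + (1-a) • B) 1 = a * A 1 + (1-a) * B 1 := comb_apply _ _ _ _ _
  rw [c0, c1]
  ext i
  fin_cases i <;>
    simp [v3, PiLp.add_apply, PiLp.smul_apply, smul_eq_mul] <;> ring

lemma Lmap_segment (A B : E2) : Lmap '' segment ℝ A B = segment ℝ (Lmap A) (Lmap B) := by
  ext z
  constructor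
  · rintro ⟨w, ⟨a, b, ha, hb, hab, rfl⟩, rfl⟩
    exact ⟨a, b, ha, hb, hab, (Lmap_comb a b hab A B).symm⟩
  · rintro ⟨a, b, ha, hb, hab, rfl⟩
    exact ⟨a • A + b • B, ⟨a, b, ha, hb, hab, rfl⟩, Lmap_comb a b hab A B⟩

lemma Lmap_Q0 : Lmap Q0 = PP0 := by
  rw [Lmap_apply]
  ext i
  fin_cases i <;> simp [v3, v2, Q0, PP0, cc] <;> norm_num

lemma Lmap_Q1 : Lmap Q1 = PP1 := by
  rw [Lmap_apply]
  ext i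
  fin_cases i <;> simp [v3, v2, Q1, PP1, cc, fmap, PiLp.smul_apply, PiLp.add_apply] <;> norm_num

lemma Lmap_Q2 : Lmap Q2 = PP2 := by
  rw [Lmap_apply]
  ext i
  fin_cases i <;> simp [v3, v2, Q2, PP2, cc, fmap, PiLp.smul_apply, PiLp.add_apply] <;> norm_num

lemma Lmap_frontier : Lmap '' (frontier Tri) = CircC := by
  rw [frontier_Tri, Set.image_union, Set.image_union, Lmap_segment, Lmap_segment, Lmap_segment,
    Lmap_Q0, Lmap_Q1, Lmap_Q2]
  rfl

lemma Tri_compact : IsCompact Tri := isCompact_of_isClosed_isBounded Tri_closed Tri_bounded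

lemma frontierTri_compact : IsCompact (frontier Tri) :=
  Tri_compact.of_isClosed_subset isClosed_frontier Tri_closed.frontier_subset

noncomputable def frontier_homeo_CircC : (frontier Tri : Set E2) ≃ₜ (CircC : Set E3) := by
  have hmem : ∀ x : frontier Tri, Lmap x ∈ CircC := by
    rintro ⟨x, hx⟩
    rw [← Lmap_frontier]
    exact ⟨x, hx, rfl⟩
  have hbij : Function.Bijective (fun x : frontier Tri => (⟨Lmap x, hmem x⟩ : CircC)) := by
    constructor
    · intro x y h
      apply Subtype.ext
      apply Lmap_inj
      exact congrArg Subtype.val h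
    · rintro ⟨z, hz⟩
      rw [← Lmap_frontier] at hz
      obtain ⟨x, hx, rfl⟩ := hz
      exact ⟨⟨x, hx⟩, rfl⟩
  have : CompactSpace (frontier Tri : Set E2) := isCompact_iff_compactSpace.mp frontierTri_compact
  exact Continuous.homeoOfEquivCompactToT2 (f := Equiv.ofBijective _ hbij)
    (Continuous.subtype_mk (Lmap_cont.comp continuous_subtype_val) _)

noncomputable def CircC_homeo_sphere : (CircC : Set E3) ≃ₜ (sphere (0:E2) 1) :=
  (sphere_homeo_frontier.trans frontier_homeo_CircC).symm

end Aux

/-- The fractal 3-cube of order 3 with digit set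
`D = {(0,1,2), (0,2,1), (1,0,2), (1,1,1), (1,2,0), (2,0,1), (2,1,0)}` is connected, possesses
the one-point intersection property, and is not a dendrite: it contains a subset homeomorphic
to a circle. -/

theorem fractal_cube_2664608_not_dendrite
    (K : Set E3) (hne : K.Nonempty) (hcomp : IsCompact K)
    (D : Set E3)
    (hDdef : D = ({v3 0 1 2, v3 0 2 1, v3 1 0 2, v3 1 1 1,
      v3 1 2 0, v3 2 0 1, v3 2 1 0} : Set E3))
    (hfc : (3 : ℝ) • K = K + D) :
    IsConnected K ∧
    (∀ di ∈ D, ∀ dj ∈ D, di ≠ dj → (piece K di ∩ piece K dj).Subsingleton) ∧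
    ¬ IsDendrite K ∧
    ∃ C : Set E3, C ⊆ K ∧ Nonempty (C ≃ₜ Metric.sphere (0 : EuclideanSpace ℝ (Fin 2)) 1) := by
  have hC : ∃ C : Set E3, C ⊆ K ∧
      Nonempty (C ≃ₜ Metric.sphere (0 : EuclideanSpace ℝ (Fin 2)) 1) :=
    ⟨CircC, CircC_subset hfc hne hcomp hDdef, ⟨CircC_homeo_sphere⟩⟩
  exact ⟨K_connected hfc hne hcomp hDdef, one_point hfc hne hcomp hDdef,
    fun hd => hd.2.2.2 hC, hC⟩
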